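/- Let Γ be a distance-regular graph with vertex set X and diameter D ≥ 1 that is formally self-dual with respect to an ordering {E_i}_{i=0}^D of the primitive idempotents of its Bose–Mesner algebra M. Let f, τ_0, …, τ_D be nonzero complex scalars with τ_0 = 1; set W = f Σ_{i=0}^D τ_i E_i and, for each vertex x ∈ X, W*(x) = f Σ_{i=0}^D τ_i E*_i(x). Assume that for every x ∈ X and every irreducible T(x)-module U: (i) U is thin; (ii) the endpoint of U equals the dual endpoint of U; (iii) the restrictions of A_1 and A*_1(x) to U form a spin Leonard pair on U, and the restrictions of W and W*(x) to U form a balanced Boltzmann pair for this Leonard pair; and (iv) f^{−2} = |X|^{−3/2} Σ_{i=0}^D 𝗄_i τ_i, where 𝗄_i = p^0_{ii} is the number of vertices at distance i from any fixed vertex. Then W is a spin model. -/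

import Mathlib

noncomputable section

open Finset Matrix

/-- The `i`-th distance matrix of a graph `G`. -/
def distMat {X : Type*} [Fintype X] (G : SimpleGraph X) (i : ℕ) : Matrix X X ℂ :=
  Matrix.of fun y z => if G.dist y z = i then 1 else 0

/-- `G` is a distance-regular graph of diameter `D`, with intersection numbers `p`:
`G` is connected, all distances are at most `D`, distance `D` is attained, and for
vertices `y, z` at distance `h`, the number of vertices at distance `i` from `y`
and `j` from `z` equals `p h i j`. -/
def IsDRG {X : Type*} [Fintype X] (G : SimpleGraph X) (D : ℕ) (p : ℕ → ℕ → ℕ → ℕ) : Prop :=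
  G.Connected ∧ (∀ y z : X, G.dist y z ≤ D) ∧ (∃ y z : X, G.dist y z = D) ∧
  ∀ (h i j : ℕ) (y z : X), G.dist y z = h →
    (Finset.univ.filter fun w => G.dist y w = i ∧ G.dist z w = j).card = p h i j

/-- The Bose–Mesner algebra of `G`, as the span of the distance matrices. -/
def BM {X : Type*} [Fintype X] (G : SimpleGraph X) (D : ℕ) : Submodule ℂ (Matrix X X ℂ) :=
  Submodule.span ℂ (Set.range fun i : Fin (D + 1) => distMat G (i : ℕ))

/-- `E` is an ordering of the primitive idempotents of the Bose–Mesner algebra,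
with `E 0` the trivial idempotent `|X|⁻¹ J`. -/
def IsPrimIdemOrdering {X : Type*} [Fintype X] [DecidableEq X] (G : SimpleGraph X) (D : ℕ)
    (E : Fin (D + 1) → Matrix X X ℂ) : Prop :=
  (∀ i, E i ∈ BM G D) ∧
  E 0 = (Fintype.card X : ℂ)⁻¹ • Matrix.of (fun _ _ => (1 : ℂ)) ∧
  (∀ i j, E i * E j = if i = j then E i else 0) ∧
  (∑ i, E i = 1) ∧
  Submodule.span ℂ (Set.range E) = BM G D

/-- `G` is formally self-dual with respect to `E`: the change-of-basis matrices
`P` and `Q` coincide. -/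
def IsFSD {X : Type*} [Fintype X] (G : SimpleGraph X) (D : ℕ)
    (E : Fin (D + 1) → Matrix X X ℂ) : Prop :=
  ∃ P : Fin (D + 1) → Fin (D + 1) → ℂ,
    (∀ j : Fin (D + 1), distMat G (j : ℕ) = ∑ i, P i j • E i) ∧
    (∀ j : Fin (D + 1), E j = (Fintype.card X : ℂ)⁻¹ • ∑ i, P i j • distMat G (i : ℕ))

/-- The dual idempotent `E*ᵢ(x)`. -/
def dualIdem {X : Type*} [Fintype X] [DecidableEq X] (G : SimpleGraph X) (x : X) (i : ℕ) :
    Matrix X X ℂ :=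
  Matrix.diagonal fun y => if G.dist x y = i then 1 else 0

/-- The dual distance matrix `A*ᵢ(x)`: diagonal with `(y,y)`-entry `|X| Eᵢ(x,y)`. -/
def dualDistMat {X : Type*} [Fintype X] [DecidableEq X] {D : ℕ}
    (E : Fin (D + 1) → Matrix X X ℂ) (x : X) (i : Fin (D + 1)) : Matrix X X ℂ :=
  Matrix.diagonal fun y => (Fintype.card X : ℂ) * E i x y

/-- The Terwilliger algebra `T(x)`, generated by the Bose–Mesner algebra together
with the dual idempotents. -/
def Terw {X : Type*} [Fintype X] [DecidableEq X] (G : SimpleGraph X) (D : ℕ) (x : X) :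
    Subalgebra ℂ (Matrix X X ℂ) :=
  Algebra.adjoin ℂ ((BM G D : Set (Matrix X X ℂ)) ∪
    Set.range fun i : Fin (D + 1) => dualIdem G x (i : ℕ))

/-- `U` is a `T(x)`-module. -/
def IsTMod {X : Type*} [Fintype X] [DecidableEq X] (G : SimpleGraph X) (D : ℕ) (x : X)
    (U : Submodule ℂ (X → ℂ)) : Prop :=
  ∀ B ∈ Terw G D x, ∀ v ∈ U, Matrix.mulVec B v ∈ U

/-- `U` is an irreducible `T(x)`-module. -/
def IsIrredTMod {X : Type*} [Fintype X] [DecidableEq X] (G : SimpleGraph X) (D : ℕ) (x : X)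
    (U : Submodule ℂ (X → ℂ)) : Prop :=
  IsTMod G D x U ∧ U ≠ ⊥ ∧ ∀ U' ≤ U, IsTMod G D x U' → U' = ⊥ ∨ U' = U

/-- `U` is thin: `dim E*ᵢ(x) U ≤ 1` for all `i`. -/
def IsThinMod {X : Type*} [Fintype X] [DecidableEq X] (G : SimpleGraph X) (D : ℕ) (x : X)
    (U : Submodule ℂ (X → ℂ)) : Prop :=
  ∀ i : Fin (D + 1),
    Module.finrank ℂ (U.map (Matrix.mulVecLin (dualIdem G x (i : ℕ)))) ≤ 1

/-- `r` is the endpoint of `U`: the minimal `i` with `E*ᵢ(x) U ≠ 0`. -/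
def HasEndpoint {X : Type*} [Fintype X] [DecidableEq X] (G : SimpleGraph X) (x : X)
    (U : Submodule ℂ (X → ℂ)) (r : ℕ) : Prop :=
  U.map (Matrix.mulVecLin (dualIdem G x r)) ≠ ⊥ ∧
  ∀ i < r, U.map (Matrix.mulVecLin (dualIdem G x i)) = ⊥

/-- `r` is the dual endpoint of `U`: the minimal `i` with `Eᵢ U ≠ 0`. -/
def HasDualEndpoint {X : Type*} [Fintype X] {D : ℕ} (E : Fin (D + 1) → Matrix X X ℂ)
    (U : Submodule ℂ (X → ℂ)) (r : Fin (D + 1)) : Prop :=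
  U.map (Matrix.mulVecLin (E r)) ≠ ⊥ ∧ ∀ i < r, U.map (Matrix.mulVecLin (E i)) = ⊥

/-- `d` is the diameter of the module `U`: `|{i : E*ᵢ(x) U ≠ 0}| = d + 1`. -/
def HasModDiameter {X : Type*} [Fintype X] [DecidableEq X] (G : SimpleGraph X) (D : ℕ)
    (x : X) (U : Submodule ℂ (X → ℂ)) (d : ℕ) : Prop :=
  {i : Fin (D + 1) | U.map (Matrix.mulVecLin (dualIdem G x (i : ℕ))) ≠ ⊥}.ncard = d + 1

/-- `W` is a type II matrix. -/
def IsTypeII {X : Type*} [Fintype X] [DecidableEq X] (W : Matrix X X ℂ) : Prop :=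
  W.IsSymm ∧ (∀ y z, W y z ≠ 0) ∧
  ∀ a b : X, (∑ y, W a y / W b y) = if a = b then (Fintype.card X : ℂ) else 0

/-- `W` is a spin model: type II and type III. -/
def IsSpinModel {X : Type*} [Fintype X] [DecidableEq X] (W : Matrix X X ℂ) : Prop :=
  IsTypeII W ∧ ∀ a b c : X,
    (∑ y, W a y * W b y / W c y) =
      (Real.sqrt (Fintype.card X) : ℂ) * W a b / (W a c * W b c)

/-- The Nomura algebra `N(W)` (as a set): symmetric matrices for which every
vector `u_{b,c}` is an eigenvector. -/
def NomuraSet {X : Type*} [Fintype X] (W : Matrix X X ℂ) : Set (Matrix X X ℂ) :=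
  {B | B.IsSymm ∧ ∀ b c : X, ∃ lam : ℂ,
    B.mulVec (fun y => W b y / W c y) = lam • (fun y => W b y / W c y)}

/-- A matrix is irreducible tridiagonal. -/
def IsIrredTridiag {n : ℕ} {F : Type*} [Field F] (M : Matrix (Fin n) (Fin n) F) : Prop :=
  (∀ i j : Fin n, ((i : ℕ) + 1 < (j : ℕ) ∨ (j : ℕ) + 1 < (i : ℕ)) → M i j = 0) ∧
  (∀ i j : Fin n, ((i : ℕ) + 1 = (j : ℕ) ∨ (j : ℕ) + 1 = (i : ℕ)) → M i j ≠ 0)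

/-- A Leonard pair on a space of dimension `d + 1`. -/
def IsLeonardPair {F V : Type*} [Field F] [AddCommGroup V] [Module F V]
    (d : ℕ) (A Astar : Module.End F V) : Prop :=
  (∃ b : Module.Basis (Fin (d + 1)) F V,
    IsIrredTridiag (LinearMap.toMatrix b b A) ∧ (LinearMap.toMatrix b b Astar).IsDiag) ∧
  (∃ b : Module.Basis (Fin (d + 1)) F V,
    IsIrredTridiag (LinearMap.toMatrix b b Astar) ∧ (LinearMap.toMatrix b b A).IsDiag)

/-- A Boltzmann pair for the Leonard pair `A, A*`. -/
def IsBoltzmannPair {F V : Type*} [Field F] [AddCommGroup V] [Module F V]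
    (A Astar W Wstar : Module.End F V) : Prop :=
  W ∈ Algebra.adjoin F {A} ∧ Wstar ∈ Algebra.adjoin F {Astar} ∧
  IsUnit W ∧ IsUnit Wstar ∧
  W * Astar * Ring.inverse W = Ring.inverse Wstar * A * Wstar

/-- `g : U → U` is the restriction of the matrix `B` to the invariant subspace `U`. -/
def RestrictsTo {X : Type*} [Fintype X] (B : Matrix X X ℂ) (U : Submodule ℂ (X → ℂ))
    (g : Module.End ℂ U) : Prop :=
  ∀ v : U, (g v : X → ℂ) = B.mulVec (v : X → ℂ)

/-!
The braid relation `W W*(x) W = W*(x) W W*(x)` and the intertwining relation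
`W*(x) W A*₁(x) = A₁ W*(x) W` (a rewriting of the Boltzmann condition) hold on every irreducible
`T(x)`-module. Since `T(x)` is closed under conjugate transposition, these modules span `ℂ^X`,
so both relations hold globally.

Column `x` of the intertwining relation says that `y ↦ τ_{∂(x,y)} W(y,x)` is an eigenvector of
`A₁` for the valency, hence constant on the connected graph; with the normalisation of `f` this
reads `f τ_{∂(x,y)} W(x,y) = |X|^{1/2}`. So `W*(x) = |X|^{1/2} diag(1 / W(x,·))`, which makes the
braid relation exactly the type III condition, and the Hadamard inverse of `W` is a multiple of
`Σ τ_i A_i`. Formal self-duality writes both `W` and `Σ τ_i A_i` in the basis `E_i`, and the same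
constancy makes the products of their coefficients independent of `i`; hence `W` times its
Hadamard inverse is `|X| I`, the type II condition.
-/

-- `(m : Fin (D + 1))` is `m % (D + 1)`; distances are cast only under `∀ y z, G.dist y z ≤ D`.
open Fin.NatCast

lemma Fin.natCast_eq_iff_eq_val {D m : ℕ} (hm : m ≤ D) (i : Fin (D + 1)) :
    (m : Fin (D + 1)) = i ↔ m = i := by
  rw [Fin.ext_iff, Fin.val_natCast, Nat.mod_eq_of_lt (Nat.lt_succ_of_le hm)]

namespace SimpleGraph

variable {V : Type*} {G : SimpleGraph V}

lemma Reachable.exists_dist_eq_of_le {u v : V} (h : G.Reachable u v) {i : ℕ}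
    (hi : i ≤ G.dist u v) : ∃ w, G.dist u w = i := by
  obtain ⟨p, hp⟩ := h.exists_walk_length_eq_dist
  refine ⟨p.getVert i, ?_⟩
  rw [← length_eq_dist_of_subwalk hp (p.isSubwalk_take i), Walk.take_length, hp, min_eq_left hi]

lemma Connected.eq_of_adjMatrix_mulVec_eq_degree_mul [Fintype V] [DecidableEq V]
    [DecidableRel G.Adj] (hG : G.Connected) {u : V → ℂ}
    (hu : ∀ a, (G.adjMatrix ℂ *ᵥ u) a = G.degree a * u a) (a b : V) : u a = u b := by
  have hφ : ∀ φ : ℂ →ₗ[ℝ] ℝ, φ (u a) = φ (u b) := fun φ => by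
    refine (lapMatrix_mulVec_eq_zero_iff_forall_reachable G (x := φ ∘ u)).mp ?_ a b
      (hG.preconnected a b)
    ext c
    have := congrArg φ (hu c)
    rw [adjMatrix_mulVec_apply, map_sum, ← nsmul_eq_mul, map_nsmul] at this
    simp [lapMatrix_mulVec_apply, this, nsmul_eq_mul]
  exact Complex.ext (hφ Complex.reLm) (hφ Complex.imLm)

end SimpleGraph

lemma Algebra.star_mem_adjoin {R A : Type*} [CommSemiring R] [StarRing R] [Semiring A]
    [StarRing A] [Algebra R A] [StarModule R A] {s : Set A} (hs : star s ⊆ s) {a : A}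
    (ha : a ∈ Algebra.adjoin R s) : star a ∈ Algebra.adjoin R s := by
  have : star a ∈ star (Algebra.adjoin R s) :=
    (Subalgebra.mem_star_iff _ _).2 (by rwa [star_star])
  rw [Subalgebra.star_adjoin_comm] at this
  exact Algebra.adjoin_mono hs this

lemma sum_smul_mul_sum_smul_of_orthogonal {ι R A : Type*} [Fintype ι] [DecidableEq ι]
    [CommSemiring R] [Semiring A] [Algebra R A] {e : ι → A}
    (he : ∀ i j, e i * e j = if i = j then e i else 0) (a b : ι → R) :
    (∑ i, a i • e i) * (∑ i, b i • e i) = ∑ i, (a i * b i) • e i := by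
  simp_rw [Finset.sum_mul, Finset.mul_sum, smul_mul_smul_comm, he, smul_ite, smul_zero,
    Finset.sum_ite_eq, Finset.mem_univ, if_true]

namespace Matrix

variable {n : Type*} [Fintype n]

lemma exists_isCompl_forall_mulVec_mem {S : Set (Matrix n n ℂ)} (hS : ∀ B ∈ S, Bᴴ ∈ S)
    {V : Submodule ℂ (n → ℂ)} (hV : ∀ B ∈ S, ∀ v ∈ V, B *ᵥ v ∈ V) :
    ∃ V' : Submodule ℂ (n → ℂ), IsCompl V V' ∧ ∀ B ∈ S, ∀ v ∈ V', B *ᵥ v ∈ V' := by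
  let e := WithLp.linearEquiv 2 ℂ (n → ℂ)
  refine ⟨(V.comap e.toLinearMap)ᗮ.map e.toLinearMap, ?_, ?_⟩
  · have := (Submodule.orderIsoMapComap e).isCompl_iff.mp
      (V.comap e.toLinearMap).isCompl_orthogonal
    rw [Submodule.orderIsoMapComap_apply, Submodule.orderIsoMapComap_apply] at this
    rwa [Submodule.map_comap_eq_of_surjective e.surjective] at this
  · rintro B hB _ ⟨w, hw, rfl⟩
    refine ⟨WithLp.toLp 2 (B *ᵥ w), fun u hu => ?_, rfl⟩
    have := hw (WithLp.toLp 2 (Bᴴ *ᵥ u)) (hV _ (hS B hB) _ hu)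
    simp only [EuclideanSpace.inner_eq_star_dotProduct] at this ⊢
    rwa [star_mulVec, conjTranspose_conjTranspose, dotProduct_comm, ← dotProduct_mulVec,
      dotProduct_comm] at this

variable [DecidableEq n]

lemma mulVec_col_of_mul_diagonal_eq {R : Type*} [CommSemiring R] {M A : Matrix n n R}
    {d : n → R} (h : M * diagonal d = A * M) (c : n) :
    A *ᵥ (fun y => M y c) = d c • fun y => M y c := by
  ext a
  have := congrFun₂ h a c
  rw [mul_diagonal, mul_apply] at this
  rw [Pi.smul_apply, smul_eq_mul, mul_comm, this]
  rfl

lemma isTypeII_of_mul_eq {W : Matrix n n ℂ} (hsymm : W.IsSymm) (hne : ∀ a b, W a b ≠ 0)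
    (hmul : W * of (fun a b => (W a b)⁻¹) = (Fintype.card n : ℂ) • 1) : IsTypeII W :=
  ⟨hsymm, hne, fun a b => by
    simpa [mul_apply, div_eq_mul_inv, one_apply, hsymm.apply] using congrFun₂ hmul a b⟩

lemma isSpinModel_of_braid {W : Matrix n n ℂ} (hII : IsTypeII W) {d : n → n → ℂ}
    (hd : ∀ c y, d c y * W y c = Real.sqrt (Fintype.card n))
    (hbraid : ∀ c, W * diagonal (d c) * W = diagonal (d c) * W * diagonal (d c)) :
    IsSpinModel W := by
  refine ⟨hII, fun a b c => ?_⟩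
  set s : ℂ := ↑(Real.sqrt (Fintype.card n))
  have : Nonempty n := ⟨a⟩
  have hs : s ≠ 0 := by simp [s]
  have hdc : ∀ y, d c y = s / W c y := fun y => by
    rw [eq_div_iff (hII.2.1 c y), ← hII.1.apply c y, hd]
  have := congrFun₂ (hbraid c) a b
  simp only [mul_diagonal] at this
  rw [diagonal_mul, mul_apply] at this
  simp only [mul_diagonal, hdc] at this
  rw [← mul_right_inj' hs]
  calc _ = ∑ y, W a y * (s / W c y) * W y b := by
        rw [mul_sum]
        congr! 1 with y
        rw [hII.1.apply b y]
        ring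
    _ = _ := this
    _ = _ := by
        rw [hII.1.apply a c, hII.1.apply b c]
        ring

end Matrix

lemma RestrictsTo.mul {X : Type*} [Fintype X] {B B' : Matrix X X ℂ} {U : Submodule ℂ (X → ℂ)}
    {g g' : Module.End ℂ U} (h : RestrictsTo B U g) (h' : RestrictsTo B' U g') :
    RestrictsTo (B * B') U (g * g') := fun v => by
  rw [Module.End.mul_apply, h, h', mulVec_mulVec]

lemma IsBoltzmannPair.mul_mul_eq_mul {F V : Type*} [Field F] [AddCommGroup V] [Module F V]
    {A Astar W Wstar : Module.End F V} (h : IsBoltzmannPair A Astar W Wstar) :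
    Wstar * W * Astar = A * (Wstar * W) := by
  obtain ⟨-, -, ⟨u, rfl⟩, ⟨v, rfl⟩, hconj⟩ := h
  rw [Ring.inverse_unit, Ring.inverse_unit] at hconj
  calc ↑v * ↑u * Astar = ↑v * (↑u * Astar * ↑u⁻¹) * ↑u := by simp [mul_assoc]
    _ = A * (↑v * ↑u) := by rw [hconj]; simp [mul_assoc]

section Terwilliger

variable {X : Type*} [Fintype X] {G : SimpleGraph X} {D : ℕ}

lemma distMat_conjTranspose (G : SimpleGraph X) (i : ℕ) : (distMat G i)ᴴ = distMat G i := by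
  ext a b
  simp [distMat, SimpleGraph.dist_comm, apply_ite star]

lemma star_mem_BM {B : Matrix X X ℂ} (hB : B ∈ BM G D) : star B ∈ BM G D := by
  induction hB using Submodule.span_induction with
  | mem _ h =>
    obtain ⟨i, rfl⟩ := h
    rw [star_eq_conjTranspose, distMat_conjTranspose]
    exact Submodule.subset_span ⟨i, rfl⟩
  | zero => simp
  | add _ _ _ _ h₁ h₂ => rw [star_add]; exact add_mem h₁ h₂
  | smul c _ _ h => rw [star_smul]; exact Submodule.smul_mem _ _ h

variable [DecidableEq X] {x : X}

lemma dualIdem_conjTranspose (G : SimpleGraph X) (x : X) (i : ℕ) :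
    (dualIdem G x i)ᴴ = dualIdem G x i := by
  rw [dualIdem, diagonal_conjTranspose]
  congr 1
  simp [Pi.star_def, apply_ite star]

lemma conjTranspose_mem_Terw {B : Matrix X X ℂ} (hB : B ∈ Terw G D x) : Bᴴ ∈ Terw G D x := by
  refine Algebra.star_mem_adjoin ?_ hB
  rintro A (hA | ⟨i, hi⟩)
  · exact Or.inl (star_star A ▸ star_mem_BM hA)
  · refine Or.inr ⟨i, ?_⟩
    rw [← star_star A, ← hi, star_eq_conjTranspose, dualIdem_conjTranspose]

lemma exists_isIrredTMod_le {V : Submodule ℂ (X → ℂ)} (hV : IsTMod G D x V) (hne : V ≠ ⊥) :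
    ∃ U ≤ V, IsIrredTMod G D x U := by
  obtain ⟨U, ⟨hUV, hU, hUne⟩, hmin⟩ := wellFounded_lt.has_min
    {U | U ≤ V ∧ IsTMod G D x U ∧ U ≠ ⊥} ⟨V, le_rfl, hV, hne⟩
  refine ⟨U, hUV, hU, hUne, fun U' hU'U hU' => or_iff_not_imp_left.2 fun hU'ne => ?_⟩
  by_contra h
  exact hmin U' ⟨hU'U.trans hUV, hU', hU'ne⟩ (lt_of_le_of_ne hU'U h)

lemma sSup_isIrredTMod_eq_top : sSup {U | IsIrredTMod G D x U} = ⊤ := by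
  set S := sSup {U | IsIrredTMod G D x U}
  have hS : IsTMod G D x S := fun B hB v hv =>
    (sSup_le fun U hU w hw => le_sSup hU (hU.1 B hB w hw) : S ≤ S.comap (mulVecLin B)) hv
  obtain ⟨S', hcompl, hS'⟩ :=
    exists_isCompl_forall_mulVec_mem (fun B => conjTranspose_mem_Terw) hS
  by_contra hne
  obtain ⟨U, hUS', hU⟩ :=
    exists_isIrredTMod_le hS' fun h => hne (by simpa [h] using hcompl.sup_eq_top)
  have hUS : U ≤ S := le_sSup (s := {U | IsIrredTMod G D x U}) hU
  exact hU.2.1 (disjoint_self.1 ((hcompl.disjoint.mono_left hUS).mono_right hUS'))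

lemma eq_of_forall_isIrredTMod_restrictsTo {B B' : Matrix X X ℂ}
    (h : ∀ U, IsIrredTMod G D x U → ∃ g, RestrictsTo B U g ∧ RestrictsTo B' U g) : B = B' := by
  refine Matrix.toLin'.injective (LinearMap.eqLocus_eq_top.1 (eq_top_iff.2 ?_))
  rw [← sSup_isIrredTMod_eq_top (G := G) (D := D) (x := x)]
  refine sSup_le fun U hU v hv => ?_
  obtain ⟨g, hB, hB'⟩ := h U hU
  exact (hB ⟨v, hv⟩).symm.trans (hB' ⟨v, hv⟩)

end Terwilliger

lemma IsDRG.exists_dist_eq {X : Type*} [Fintype X] {G : SimpleGraph X} {D : ℕ}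
    {p : ℕ → ℕ → ℕ → ℕ} (hDRG : IsDRG G D p) (i : Fin (D + 1)) : ∃ a b : X, G.dist a b = i := by
  obtain ⟨hconn, -, ⟨y, z, hyz⟩, -⟩ := hDRG
  exact ⟨y, (hconn.preconnected y z).exists_dist_eq_of_le (by omega)⟩

section FormallySelfDual

variable {X : Type*} [Fintype X] {G : SimpleGraph X} {D : ℕ}
  {E : Fin (D + 1) → Matrix X X ℂ} {P : Fin (D + 1) → Fin (D + 1) → ℂ}

lemma sum_smul_distMat_apply (hdle : ∀ y z, G.dist y z ≤ D) (c : Fin (D + 1) → ℂ) (a b : X) :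
    (∑ i, c i • distMat G i) a b = c (G.dist a b) := by
  simp [Matrix.sum_apply, distMat, ← Fin.natCast_eq_iff_eq_val (hdle a b)]

lemma distMat_one [DecidableRel G.Adj] : distMat G 1 = G.adjMatrix ℂ := by
  ext a b
  simp [distMat, SimpleGraph.dist_eq_one_iff_adj]

lemma distMat_mulVec_one_apply (j : ℕ) (a : X) :
    (distMat G j *ᵥ 1) a = #{y | G.dist a y = j} := by
  simp [mulVec, dotProduct, distMat]

lemma idem_apply (hdle : ∀ y z, G.dist y z ≤ D)
    (hEP : ∀ j : Fin (D + 1), E j = (Fintype.card X : ℂ)⁻¹ • ∑ i, P i j • distMat G i)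
    (j : Fin (D + 1)) (a b : X) : E j a b = (Fintype.card X : ℂ)⁻¹ * P (G.dist a b) j := by
  rw [hEP j, Matrix.smul_apply, sum_smul_distMat_apply hdle (P · j), smul_eq_mul]

lemma sum_smul_idem_apply (hdle : ∀ y z, G.dist y z ≤ D)
    (hEP : ∀ j : Fin (D + 1), E j = (Fintype.card X : ℂ)⁻¹ • ∑ i, P i j • distMat G i)
    (c : Fin (D + 1) → ℂ) (a b : X) :
    (∑ i, c i • E i) a b = (Fintype.card X : ℂ)⁻¹ * ∑ j, P (G.dist a b) j * c j := by
  simp [Matrix.sum_apply, idem_apply hdle hEP, mul_sum, mul_comm, mul_left_comm]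

lemma isSymm_sum_smul_idem (hdle : ∀ y z, G.dist y z ≤ D)
    (hEP : ∀ j : Fin (D + 1), E j = (Fintype.card X : ℂ)⁻¹ • ∑ i, P i j • distMat G i)
    (c : Fin (D + 1) → ℂ) : (∑ i, c i • E i).IsSymm := by
  ext a b
  rw [transpose_apply, sum_smul_idem_apply hdle hEP, sum_smul_idem_apply hdle hEP,
    SimpleGraph.dist_comm]

lemma sum_smul_distMat_eq (hAP : ∀ j : Fin (D + 1), distMat G j = ∑ i, P i j • E i)
    (c : Fin (D + 1) → ℂ) : ∑ j, c j • distMat G j = ∑ i, (∑ j, P i j * c j) • E i := by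
  simp_rw [hAP, smul_sum, smul_smul, sum_smul]
  rw [sum_comm]
  simp_rw [mul_comm]

variable [DecidableEq X]

lemma sum_smul_dualIdem (hdle : ∀ y z, G.dist y z ≤ D) (c : Fin (D + 1) → ℂ) (x : X) :
    ∑ i, c i • dualIdem G x i = diagonal fun y => c (G.dist x y) := by
  ext y z
  by_cases h : y = z
  · subst h
    simp [Matrix.sum_apply, dualIdem, ← Fin.natCast_eq_iff_eq_val (hdle x y)]
  · simp [Matrix.sum_apply, dualIdem, h]

lemma IsPrimIdemOrdering.mulVec_one (hE : IsPrimIdemOrdering G D E) (i : Fin (D + 1)) :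
    E i *ᵥ 1 = if i = 0 then 1 else 0 := by
  rcases isEmpty_or_nonempty X with hX | hX
  · exact Subsingleton.elim _ _
  have h0 : E 0 *ᵥ 1 = 1 := by
    ext a
    simp [hE.2.1, mulVec, dotProduct]
  calc E i *ᵥ 1 = E i *ᵥ (E 0 *ᵥ 1) := by rw [h0]
    _ = _ := by rw [mulVec_mulVec, hE.2.2.1]; split_ifs with h <;> simp [h, h0]

lemma card_filter_dist_eq_P_zero (hE : IsPrimIdemOrdering G D E)
    (hAP : ∀ j : Fin (D + 1), distMat G j = ∑ i, P i j • E i) (a : X) (j : Fin (D + 1)) :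
    (#{y | G.dist a y = j} : ℂ) = P 0 j := by
  rw [← distMat_mulVec_one_apply, hAP j, sum_mulVec]
  simp [smul_mulVec, hE.mulVec_one, ite_apply]

lemma apply_eq_apply_self_of_mul_dualDistMat_eq (hconn : G.Connected) (hD : 1 ≤ D)
    (hdle : ∀ y z, G.dist y z ≤ D) (hE : IsPrimIdemOrdering G D E)
    (hAP : ∀ j : Fin (D + 1), distMat G j = ∑ i, P i j • E i)
    (hEP : ∀ j : Fin (D + 1), E j = (Fintype.card X : ℂ)⁻¹ • ∑ i, P i j • distMat G i)
    {M : Matrix X X ℂ} {x : X} (hM : M * dualDistMat E x 1 = distMat G 1 * M) (y : X) :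
    M y x = M x x := by
  classical
  have : Nonempty X := hconn.nonempty
  have hval1 : ((1 : Fin (D + 1)) : ℕ) = 1 := by
    rw [Fin.val_one', Nat.mod_eq_of_lt (by omega)]
  have hdeg : ∀ a, (G.degree a : ℂ) = Fintype.card X * E 1 x x := fun a => by
    rw [idem_apply hdle hEP, SimpleGraph.dist_self, Nat.cast_zero, ← mul_assoc,
      mul_inv_cancel₀ (Nat.cast_ne_zero.2 Fintype.card_ne_zero), one_mul,
      ← card_filter_dist_eq_P_zero hE hAP a, hval1, ← SimpleGraph.card_neighborFinset_eq_degree]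
    congr 2
    ext; simp [SimpleGraph.dist_eq_one_iff_adj]
  refine hconn.eq_of_adjMatrix_mulVec_eq_degree_mul (u := fun y => M y x) (fun a => ?_) y x
  rw [← distMat_one, mulVec_col_of_mul_diagonal_eq hM x, hdeg]
  rfl

lemma mul_apply_self_eq_sqrt_card {p : ℕ → ℕ → ℕ → ℕ} (hDRG : IsDRG G D p)
    (hE : IsPrimIdemOrdering G D E) (hAP : ∀ j : Fin (D + 1), distMat G j = ∑ i, P i j • E i)
    (hEP : ∀ j : Fin (D + 1), E j = (Fintype.card X : ℂ)⁻¹ • ∑ i, P i j • distMat G i)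
    {f : ℂ} {τ : Fin (D + 1) → ℂ} {W : Matrix X X ℂ} (hf : f ≠ 0) (hW : W = f • ∑ i, τ i • E i)
    (hf2 : f ^ (-2 : ℤ) = (Real.sqrt (Fintype.card X) : ℂ) ^ (-3 : ℤ) *
      ∑ i : Fin (D + 1), (p 0 i i : ℂ) * τ i) (x : X) :
    f * W x x = Real.sqrt (Fintype.card X) := by
  obtain ⟨hconn, hdle, -, hp⟩ := hDRG
  set s : ℂ := ↑(Real.sqrt (Fintype.card X))
  have hs2 : s ^ 2 = Fintype.card X := by
    simp [s, ← Complex.ofReal_pow]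
  have : Nonempty X := hconn.nonempty
  have hs : s ≠ 0 := by simp [s]
  have hp0 : ∀ i : Fin (D + 1), (p 0 i i : ℂ) = P 0 i := fun i => by
    rw [← card_filter_dist_eq_P_zero hE hAP x i, ← hp 0 i i x x SimpleGraph.dist_self]
    simp
  simp_rw [hp0, _root_.zpow_neg, zpow_ofNat] at hf2
  rw [hW, Matrix.smul_apply, sum_smul_idem_apply hdle hEP, SimpleGraph.dist_self, Nat.cast_zero,
    smul_eq_mul, ← hs2]
  field_simp at hf2 ⊢
  exact hf2.symm

lemma mul_hadamardInv_eq_card_smul_one (hdle : ∀ y z, G.dist y z ≤ D)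
    (hatt : ∀ i : Fin (D + 1), ∃ a b : X, G.dist a b = i) (hE : IsPrimIdemOrdering G D E)
    (hAP : ∀ j : Fin (D + 1), distMat G j = ∑ i, P i j • E i)
    (hEP : ∀ j : Fin (D + 1), E j = (Fintype.card X : ℂ)⁻¹ • ∑ i, P i j • distMat G i)
    {f s : ℂ} {τ : Fin (D + 1) → ℂ} {W : Matrix X X ℂ} (hf : f ≠ 0) (hs : s ≠ 0)
    (hW : W = f • ∑ i, τ i • E i) (hcol : ∀ x y, f * τ (G.dist x y) * W y x = s) :
    W * of (fun a b => (W a b)⁻¹) = (Fintype.card X : ℂ) • 1 := by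
  have hinv : of (fun a b => (W a b)⁻¹) = (f / s) • ∑ j, τ j • distMat G j := by
    ext a b
    rw [of_apply, Matrix.smul_apply, sum_smul_distMat_apply hdle, SimpleGraph.dist_comm,
      smul_eq_mul]
    refine (eq_inv_of_mul_eq_one_left ?_).symm
    calc f / s * τ (G.dist b a) * W a b = f * τ (G.dist b a) * W a b / s := by ring
      _ = 1 := by rw [hcol, div_self hs]
  have hcoef : ∀ i, τ i * ∑ j, P i j * τ j = Fintype.card X * s / f ^ 2 := fun i => by
    obtain ⟨a, b, hab⟩ := hatt i
    have h := hcol b a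
    rw [hW, Matrix.smul_apply, sum_smul_idem_apply hdle hEP, SimpleGraph.dist_comm, hab,
      Fin.cast_val_eq_self, smul_eq_mul] at h
    have : Nonempty X := ⟨a⟩
    rw [← h]
    field_simp
  rw [hinv, hW, smul_mul_smul_comm, sum_smul_distMat_eq hAP,
    sum_smul_mul_sum_smul_of_orthogonal hE.2.2.1]
  simp_rw [hcoef]
  rw [← smul_sum, hE.2.2.2.1, smul_smul]
  congr 1
  field_simp

end FormallySelfDual

theorem spin_model_from_spin_leonard_pairs_general {X : Type*} [Fintype X] [DecidableEq X]
    (G : SimpleGraph X) (D : ℕ) (hD : 1 ≤ D)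
    (p : ℕ → ℕ → ℕ → ℕ) (hDRG : IsDRG G D p)
    (E : Fin (D + 1) → Matrix X X ℂ) (hE : IsPrimIdemOrdering G D E)
    (hFSD : IsFSD G D E)
    (f : ℂ) (τ : Fin (D + 1) → ℂ)
    (hf : f ≠ 0) (hτ0 : τ 0 = 1)
    (W : Matrix X X ℂ) (hW : W = f • ∑ i, τ i • E i)
    (Ws : X → Matrix X X ℂ)
    (hWs : ∀ x : X, Ws x = f • ∑ i, τ i • dualIdem G x (i : ℕ))
    (hmod : ∀ (x : X) (U : Submodule ℂ (X → ℂ)), IsIrredTMod G D x U →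
      IsThinMod G D x U ∧
      (∃ r : Fin (D + 1), HasEndpoint G x U (r : ℕ) ∧ HasDualEndpoint E U r) ∧
      (∃ AU AsU WU WsU : Module.End ℂ U,
        RestrictsTo (distMat G 1) U AU ∧
        RestrictsTo (dualDistMat E x 1) U AsU ∧
        RestrictsTo W U WU ∧
        RestrictsTo (Ws x) U WsU ∧
        (∃ n : ℕ, IsLeonardPair n AU AsU) ∧
        IsBoltzmannPair AU AsU WU WsU ∧
        WU * WsU * WU = WsU * WU * WsU))
    (hf2 : f ^ (-2 : ℤ) =
      (Real.sqrt (Fintype.card X) : ℂ) ^ (-3 : ℤ) * ∑ i : Fin (D + 1), (p 0 (i : ℕ) (i : ℕ) : ℂ) * τ i) :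
    IsSpinModel W := by
  obtain ⟨P, hAP, hEP⟩ := hFSD
  have hbraid : ∀ x, W * Ws x * W = Ws x * W * Ws x := fun x =>
    eq_of_forall_isIrredTMod_restrictsTo fun U hU => by
      obtain ⟨-, -, -, -, WU, WsU, -, -, hWU, hWsU, -, -, hbal⟩ := hmod x U hU
      exact ⟨_, (hWU.mul hWsU).mul hWU, hbal ▸ (hWsU.mul hWU).mul hWsU⟩
  have hinter : ∀ x, Ws x * W * dualDistMat E x 1 = distMat G 1 * (Ws x * W) := fun x =>
    eq_of_forall_isIrredTMod_restrictsTo fun U hU => by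
      obtain ⟨-, -, AU, AsU, WU, WsU, hA, hAs, hWU, hWsU, -, hB, -⟩ := hmod x U hU
      exact ⟨_, (hWsU.mul hWU).mul hAs, hB.mul_mul_eq_mul ▸ hA.mul (hWsU.mul hWU)⟩
  have hWs_diag : ∀ x, Ws x = diagonal fun y => f * τ (G.dist x y) := fun x => by
    rw [hWs, sum_smul_dualIdem hDRG.2.1, ← diagonal_smul]
    rfl
  have hcol : ∀ x y, f * τ (G.dist x y) * W y x = Real.sqrt (Fintype.card X) := fun x y => by
    have := apply_eq_apply_self_of_mul_dualDistMat_eq hDRG.1 hD hDRG.2.1 hE hAP hEP (hinter x) y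
    simp only [hWs_diag, diagonal_mul, SimpleGraph.dist_self, Nat.cast_zero, hτ0, mul_one] at this
    rw [this, mul_apply_self_eq_sqrt_card hDRG hE hAP hEP hf hW hf2]
  have : Nonempty X := hDRG.1.nonempty
  have hs : (Real.sqrt (Fintype.card X) : ℂ) ≠ 0 := by simp
  have hne : ∀ a b, W a b ≠ 0 := fun a b => right_ne_zero_of_mul ((hcol b a).symm ▸ hs)
  have hsymm : W.IsSymm := hW ▸ (isSymm_sum_smul_idem hDRG.2.1 hEP τ).smul f
  refine isSpinModel_of_braid (isTypeII_of_mul_eq hsymm hne (mul_hadamardInv_eq_card_smul_one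
    hDRG.2.1 hDRG.exists_dist_eq hE hAP hEP hf hs hW hcol)) hcol fun c => ?_
  simpa only [hWs_diag] using hbraid c

/-- from spin Leonard pairs on the irreducible Terwilliger modules
to a spin model. -/
theorem spin_model_from_spin_leonard_pairs {X : Type*} [Fintype X] [DecidableEq X]
    (G : SimpleGraph X) (D : ℕ) (hD : 1 ≤ D)
    (p : ℕ → ℕ → ℕ → ℕ) (hDRG : IsDRG G D p)
    (E : Fin (D + 1) → Matrix X X ℂ) (hE : IsPrimIdemOrdering G D E)
    (hFSD : IsFSD G D E)
    (f : ℂ) (τ : Fin (D + 1) → ℂ)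
    (hf : f ≠ 0) (hτ : ∀ i, τ i ≠ 0) (hτ0 : τ 0 = 1)
    (W : Matrix X X ℂ) (hW : W = f • ∑ i, τ i • E i)
    (Ws : X → Matrix X X ℂ)
    (hWs : ∀ x : X, Ws x = f • ∑ i, τ i • dualIdem G x (i : ℕ))
    (hmod : ∀ (x : X) (U : Submodule ℂ (X → ℂ)), IsIrredTMod G D x U →
      IsThinMod G D x U ∧
      (∃ r : Fin (D + 1), HasEndpoint G x U (r : ℕ) ∧ HasDualEndpoint E U r) ∧
      (∃ AU AsU WU WsU : Module.End ℂ U,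
        RestrictsTo (distMat G 1) U AU ∧
        RestrictsTo (dualDistMat E x 1) U AsU ∧
        RestrictsTo W U WU ∧
        RestrictsTo (Ws x) U WsU ∧
        (∃ n : ℕ, IsLeonardPair n AU AsU) ∧
        IsBoltzmannPair AU AsU WU WsU ∧
        WU * WsU * WU = WsU * WU * WsU))
    (hf2 : f ^ (-2 : ℤ) =
      (Real.sqrt (Fintype.card X) : ℂ) ^ (-3 : ℤ) * ∑ i : Fin (D + 1), (p 0 (i : ℕ) (i : ℕ) : ℂ) * τ i) :
    IsSpinModel W :=
  spin_model_from_spin_leonard_pairs_general G D hD p hDRG E hE hFSD f τ hf hτ0 W hW Ws hWs hmod hf2
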